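/- arXiv:2401.07562 — 2 statements merged into one kernel-verified Lean document; each statement's English description precedes it below -/
import Mathlib

section
/- In the setting where the worst-case error of the weights w equals √(wᵀ K_b w) and K_b is positive definite, the normalized weights minimizing the worst-case error are w* = K_b⁻¹𝟙/(𝟙ᵀK_b⁻¹𝟙), and for any g ∈ H the extrapolation estimate s[g] = (𝟙ᵀK_b⁻¹ g(X))/( 𝟙ᵀK_b⁻¹𝟙) satisfies |g(0) - s[g]| ≤ ‖g‖_H / √(𝟙ᵀK_b⁻¹𝟙). -/
open Matrix

theorem posdef_cauchy_schwarz' {n : ℕ} {M : Matrix (Fin n) (Fin n) ℝ} (hM : M.PosDef)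
    (u v : Fin n → ℝ) : (u ⬝ᵥ M *ᵥ v)^2 ≤ (u ⬝ᵥ M *ᵥ u) * (v ⬝ᵥ M *ᵥ v) := by
  have hMt : Mᵀ = M := by
    have := hM.isHermitian
    simpa [Matrix.IsHermitian, conjTranspose_eq_transpose_of_trivial] using this
  have hsym : ∀ a b : Fin n → ℝ, a ⬝ᵥ M *ᵥ b = b ⬝ᵥ M *ᵥ a := by
    intro a b
    rw [dotProduct_mulVec, ← mulVec_transpose, hMt, dotProduct_comm]
  have key : ∀ t : ℝ, 0 ≤ (v ⬝ᵥ M *ᵥ v) * (t * t) + (2 * (u ⬝ᵥ M *ᵥ v)) * t + (u ⬝ᵥ M *ᵥ u) := by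
    intro t
    have h0 : 0 ≤ (u + t • v) ⬝ᵥ M *ᵥ (u + t • v) := by
      rcases eq_or_ne (u + t • v) 0 with h | h
      · simp [h]
      · have := hM.dotProduct_mulVec_pos h; simpa using this.le
    have hexp : (u + t • v) ⬝ᵥ M *ᵥ (u + t • v)
        = (v ⬝ᵥ M *ᵥ v) * (t * t) + (2 * (u ⬝ᵥ M *ᵥ v)) * t + (u ⬝ᵥ M *ᵥ u) := by
      simp only [mulVec_add, mulVec_smul, dotProduct_add, add_dotProduct, dotProduct_smul,
        smul_dotProduct, smul_eq_mul, hsym v u]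
      ring
    linarith [hexp ▸ h0]
  have hd := discrim_le_zero key
  rw [discrim] at hd
  nlinarith


/-- Setting of Proposition (wce realised): `H` an RKHS on `X` with kernel `kb`
vanishing at the extrapolation point `x0`; the normalized weights
`w* = K⁻¹𝟙/(𝟙ᵀK⁻¹𝟙)` minimize the worst-case error `√(wᵀKw)`, and the resulting
extrapolation estimate satisfies the stated error bound. -/
theorem gre_optimal_weights_and_error_bound
    {X : Type*} {H : Type*} [NormedAddCommGroup H] [InnerProductSpace ℝ H]
    [CompleteSpace H]
    (eval : H → X → ℝ) (φ : X → H) (kb : X → X → ℝ)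
    (hrepr : ∀ (g : H) (x : X), eval g x = inner ℝ g (φ x))
    (hker : ∀ x y : X, kb x y = inner ℝ (φ x) (φ y))
    (x0 : X) (hx0 : ∀ x : X, kb x0 x = 0)
    (n : ℕ) (hn : 0 < n) (x : Fin n → X) (hxinj : Function.Injective x)
    (hxne : ∀ i, x i ≠ x0)
    (Kb : Matrix (Fin n) (Fin n) ℝ) (hKb : Kb = fun i j => kb (x i) (x j))
    (hpd : Kb.PosDef)
    (ones : Fin n → ℝ) (hones : ones = fun _ => 1) :
    let wstar : Fin n → ℝ := (ones ⬝ᵥ Kb⁻¹ *ᵥ ones)⁻¹ • (Kb⁻¹ *ᵥ ones)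
    (∀ w : Fin n → ℝ, ∑ i, w i = 1 →
      Real.sqrt (wstar ⬝ᵥ Kb *ᵥ wstar) ≤ Real.sqrt (w ⬝ᵥ Kb *ᵥ w)) ∧
    (∀ g : H,
      |eval g x0 - (ones ⬝ᵥ Kb⁻¹ *ᵥ (fun i => eval g (x i))) /
          (ones ⬝ᵥ Kb⁻¹ *ᵥ ones)| ≤
        ‖g‖ / Real.sqrt (ones ⬝ᵥ Kb⁻¹ *ᵥ ones)) := by
  intro wstar
  letI := hpd.isUnit.invertible
  set q : ℝ := ones ⬝ᵥ Kb⁻¹ *ᵥ ones with hq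
  set v : Fin n → ℝ := Kb⁻¹ *ᵥ ones with hv
  have honesne : ones ≠ 0 := by
    intro h
    have : ones ⟨0, hn⟩ = 0 := by rw [h]; rfl
    rw [hones] at this; exact one_ne_zero this
  have hqpos : 0 < q := by
    have := hpd.inv.dotProduct_mulVec_pos honesne
    simpa [hq] using this
  have hKv : Kb *ᵥ v = ones := by
    rw [hv, mulVec_mulVec, Matrix.mul_inv_of_invertible, one_mulVec]
  have hvKv : v ⬝ᵥ Kb *ᵥ v = q := by
    rw [hKv, dotProduct_comm]
  -- value at wstar
  have hwstarval : wstar ⬝ᵥ Kb *ᵥ wstar = q⁻¹ := by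
    show (q⁻¹ • v) ⬝ᵥ Kb *ᵥ (q⁻¹ • v) = q⁻¹
    rw [mulVec_smul, dotProduct_smul, smul_dotProduct, hvKv]
    simp only [smul_eq_mul]; field_simp
  constructor
  · intro w hw
    apply Real.sqrt_le_sqrt
    rw [hwstarval]
    have hcs := posdef_cauchy_schwarz' hpd w v
    have hwv : w ⬝ᵥ Kb *ᵥ v = 1 := by
      rw [hKv, hones]
      simpa [dotProduct] using hw
    rw [hwv, hvKv] at hcs
    have hwKw : 0 < w ⬝ᵥ Kb *ᵥ w := by
      refine lt_of_lt_of_eq (hpd.dotProduct_mulVec_pos (x := w) ?_) (by simp)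
      intro h
      rw [h] at hw
      simp at hw
    rw [inv_le_iff_one_le_mul₀ hqpos]
    nlinarith
  · intro g
    have hφ0 : φ x0 = 0 := by
      have : (inner ℝ (φ x0) (φ x0) : ℝ) = 0 := by rw [← hker]; exact hx0 x0
      exact inner_self_eq_zero.mp this
    have hg0 : eval g x0 = 0 := by rw [hrepr, hφ0, inner_zero_right]
    -- symmetry of Kb⁻¹
    have hMt : Kbᵀ = Kb := by
      have := hpd.isHermitian
      simpa [Matrix.IsHermitian, conjTranspose_eq_transpose_of_trivial] using this
    have hMinvT : Kb⁻¹ᵀ = Kb⁻¹ := by rw [transpose_nonsing_inv, hMt]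
    have hswap : ∀ b : Fin n → ℝ, ones ⬝ᵥ Kb⁻¹ *ᵥ b = v ⬝ᵥ b := by
      intro b
      rw [dotProduct_mulVec, ← mulVec_transpose, hMinvT]
    set gX : Fin n → ℝ := fun i => eval g (x i) with hgX
    set h : H := ∑ i, wstar i • φ (x i) with hh
    have hinner : (inner ℝ g h : ℝ) = wstar ⬝ᵥ gX := by
      rw [hh, inner_sum]
      simp [dotProduct, hgX, real_inner_smul_right, hrepr, mul_comm]
    have hhh : (inner ℝ h h : ℝ) = wstar ⬝ᵥ Kb *ᵥ wstar := by
      rw [hh, inner_sum]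
      simp only [real_inner_smul_right, sum_inner, real_inner_smul_left]
      simp [dotProduct, mulVec, hKb, hker, Finset.mul_sum, dotProduct]
      rw [Finset.sum_comm]
      apply Finset.sum_congr rfl; intro i _
      apply Finset.sum_congr rfl; intro j _
      ring
    have hnormh : ‖h‖ = Real.sqrt q⁻¹ := by
      rw [← Real.sqrt_sq (norm_nonneg h), ← real_inner_self_eq_norm_sq, hhh, hwstarval]
    have hsval : (ones ⬝ᵥ Kb⁻¹ *ᵥ gX) / q = inner ℝ g h := by
      rw [hswap, hinner]
      show v ⬝ᵥ gX / q = (q⁻¹ • v) ⬝ᵥ gX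
      rw [smul_dotProduct, smul_eq_mul, div_eq_inv_mul]
    rw [hg0, hsval, zero_sub, abs_neg]
    calc |(inner ℝ g h : ℝ)| ≤ ‖g‖ * ‖h‖ := abs_real_inner_le_norm g h
    _ = ‖g‖ / Real.sqrt q := by
        rw [hnormh, Real.sqrt_inv, div_eq_mul_inv]
end

section
/- Let xₙ = 1/n and p ∈ ℕ with p ≥ 1. If eₙ = C₁ + C₂ xₙ^{p+1} + rₙ with |rₙ| ≤ C xₙ^{p+2}, then |eₙ - eₙ₊₁| / (xₙ - xₙ₊₁)^p → 0 as n → ∞. -/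
/-!
Subtracting consecutive terms kills `C₁`, so after dividing by `(xₙ - xₙ₊₁)ᵖ` the quotient
splits into `C₂ (xₙ^{p+1} - xₙ₊₁^{p+1}) / (xₙ - xₙ₊₁)ᵖ` and the two remainder quotients
`rₙ / (xₙ - xₙ₊₁)ᵖ`, `rₙ₊₁ / (xₙ - xₙ₊₁)ᵖ`, dominated by `|C| xₙ^{p+2} / (xₙ - xₙ₊₁)ᵖ` and
`|C| xₙ₊₁^{p+2} / (xₙ - xₙ₊₁)ᵖ`; the whole quotient tends to `0` once these three quotients do. For `xₙ = 1/n` and `p = 1` one has `xₙ - xₙ₊₁ = xₙ xₙ₊₁`, and the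
three quotients are `xₙ + xₙ₊₁`, `xₙ + xₙ²` and `xₙ₊₁ - xₙ₊₁²`.
-/

open Filter Topology

theorem tendsto_div_zero_of_abs_le_mul {α : Type*} {l : Filter α} {r b d : α → ℝ} {C : ℝ}
    (hr : ∀ᶠ n in l, |r n| ≤ C * b n) (hb : Tendsto (fun n => b n / d n) l (𝓝 0)) :
    Tendsto (fun n => r n / d n) l (𝓝 0) := by
  have hbound : Tendsto (fun n => |C| * |b n / d n|) l (𝓝 0) := by
    simpa using (hb.abs.const_mul |C|)
  refine squeeze_zero_norm' ?_ hbound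
  filter_upwards [hr] with n hn
  rw [Real.norm_eq_abs, abs_div, abs_div, ← mul_div_assoc, ← abs_mul]
  exact div_le_div_of_nonneg_right (hn.trans (le_abs_self _)) (abs_nonneg _)

theorem tendsto_abs_sub_succ_div_pow_of_expansion {x e r : ℕ → ℝ} {p : ℕ} {C₁ C₂ C : ℝ}
    (he : ∀ n, e n = C₁ + C₂ * x n ^ (p + 1) + r n)
    (hr : ∀ᶠ n in atTop, |r n| ≤ C * x n ^ (p + 2))
    (hlead : Tendsto (fun n => (x n ^ (p + 1) - x (n + 1) ^ (p + 1)) / (x n - x (n + 1)) ^ p)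
      atTop (𝓝 0))
    (hrem : Tendsto (fun n => x n ^ (p + 2) / (x n - x (n + 1)) ^ p) atTop (𝓝 0))
    (hrem_succ : Tendsto (fun n => x (n + 1) ^ (p + 2) / (x n - x (n + 1)) ^ p) atTop (𝓝 0)) :
    Tendsto (fun n => |e n - e (n + 1)| / (x n - x (n + 1)) ^ p) atTop (𝓝 0) := by
  have hr_succ : ∀ᶠ n in atTop, |r (n + 1)| ≤ C * x (n + 1) ^ (p + 2) :=
    (tendsto_add_atTop_nat 1).eventually hr
  have hsplit : ∀ n, (e n - e (n + 1)) / (x n - x (n + 1)) ^ p =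
      C₂ * ((x n ^ (p + 1) - x (n + 1) ^ (p + 1)) / (x n - x (n + 1)) ^ p) +
        r n / (x n - x (n + 1)) ^ p - r (n + 1) / (x n - x (n + 1)) ^ p := by
    intro n
    rw [he, he]
    ring
  have hquot : Tendsto (fun n => (e n - e (n + 1)) / (x n - x (n + 1)) ^ p) atTop (𝓝 0) := by
    simp_rw [hsplit]
    simpa using ((hlead.const_mul C₂).add (tendsto_div_zero_of_abs_le_mul hr hrem)).sub
      (tendsto_div_zero_of_abs_le_mul hr_succ hrem_succ)
  rw [tendsto_zero_iff_norm_tendsto_zero] at hquot ⊢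
  simpa [abs_div] using hquot

theorem inv_natCast_sub_inv_succ {n : ℕ} (hn : n ≠ 0) :
    (n : ℝ)⁻¹ - ((n : ℝ) + 1)⁻¹ = (n : ℝ)⁻¹ * ((n : ℝ) + 1)⁻¹ := by
  field_simp
  ring

theorem tendsto_inv_natCast_succ : Tendsto (fun n : ℕ => ((n : ℝ) + 1)⁻¹) atTop (𝓝 0) := by
  simpa using tendsto_one_div_add_atTop_nhds_zero_nat (𝕜 := ℝ)

theorem tendsto_inv_natCast_sq_sub_div :
    Tendsto (fun n : ℕ => ((n : ℝ)⁻¹ ^ 2 - ((n : ℝ) + 1)⁻¹ ^ 2) / ((n : ℝ)⁻¹ - ((n : ℝ) + 1)⁻¹))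
      atTop (𝓝 0) := by
  have hne : ∀ n : ℕ, (n : ℝ)⁻¹ - ((n : ℝ) + 1)⁻¹ ≠ 0 := fun n => by
    rw [sub_ne_zero, Ne, inv_inj]
    linarith
  have heq : ∀ n : ℕ, ((n : ℝ)⁻¹ ^ 2 - ((n : ℝ) + 1)⁻¹ ^ 2) / ((n : ℝ)⁻¹ - ((n : ℝ) + 1)⁻¹) =
      (n : ℝ)⁻¹ + ((n : ℝ) + 1)⁻¹ := fun n => by
    rw [sq_sub_sq, mul_div_cancel_right₀ _ (hne n)]
  simp_rw [heq]
  simpa using tendsto_inv_atTop_nhds_zero_nat.add tendsto_inv_natCast_succ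

theorem tendsto_inv_natCast_pow_three_div :
    Tendsto (fun n : ℕ => (n : ℝ)⁻¹ ^ 3 / ((n : ℝ)⁻¹ - ((n : ℝ) + 1)⁻¹)) atTop (𝓝 0) := by
  have heq : ∀ᶠ n : ℕ in atTop, (n : ℝ)⁻¹ + (n : ℝ)⁻¹ ^ 2 =
      (n : ℝ)⁻¹ ^ 3 / ((n : ℝ)⁻¹ - ((n : ℝ) + 1)⁻¹) := by
    filter_upwards [eventually_ne_atTop 0] with n hn
    rw [inv_natCast_sub_inv_succ hn]
    field_simp
  have hx := tendsto_inv_atTop_nhds_zero_nat (𝕜 := ℝ)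
  simpa using (hx.add (hx.pow 2)).congr' heq

theorem tendsto_inv_natCast_succ_pow_three_div :
    Tendsto (fun n : ℕ => ((n : ℝ) + 1)⁻¹ ^ 3 / ((n : ℝ)⁻¹ - ((n : ℝ) + 1)⁻¹)) atTop (𝓝 0) := by
  have heq : ∀ᶠ n : ℕ in atTop, ((n : ℝ) + 1)⁻¹ - ((n : ℝ) + 1)⁻¹ ^ 2 =
      ((n : ℝ) + 1)⁻¹ ^ 3 / ((n : ℝ)⁻¹ - ((n : ℝ) + 1)⁻¹) := by
    filter_upwards [eventually_ne_atTop 0] with n hn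
    rw [inv_natCast_sub_inv_succ hn]
    field_simp
    ring
  have hx := tendsto_inv_natCast_succ
  simpa using (hx.sub (hx.pow 2)).congr' heq

theorem inverse_n_sequence_smooth_extension_general
    (p : ℕ) (hp : p = 1) (C₁ C₂ C : ℝ) (e r : ℕ → ℝ)
    (he : ∀ n : ℕ, e n = C₁ + C₂ * ((n : ℝ)⁻¹) ^ (p + 1) + r n)
    (hr : ∀ n : ℕ, 1 ≤ n → |r n| ≤ C * ((n : ℝ)⁻¹) ^ (p + 2)) :
    Tendsto
      (fun n : ℕ => |e n - e (n + 1)| / ((n : ℝ)⁻¹ - ((n : ℝ) + 1)⁻¹) ^ p)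
      atTop (nhds 0) := by
  subst hp
  have key := tendsto_abs_sub_succ_div_pow_of_expansion (x := fun n : ℕ => (n : ℝ)⁻¹) he
    (eventually_atTop.2 ⟨1, hr⟩)
    (by simpa using tendsto_inv_natCast_sq_sub_div)
    (by simpa using tendsto_inv_natCast_pow_three_div)
    (by simpa using tendsto_inv_natCast_succ_pow_three_div)
  simpa using key

/-- Corollary 1 of the paper for the sequence `xₙ = 1/n`, formalized (as the
context instructs) for `p = 1`. -/
theorem inverse_n_sequence_smooth_extension
    (p : ℕ) (hp : p = 1) (C₁ C₂ C : ℝ) (hC : 0 ≤ C) (e r : ℕ → ℝ)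
    (he : ∀ n : ℕ, e n = C₁ + C₂ * ((n : ℝ)⁻¹) ^ (p + 1) + r n)
    (hr : ∀ n : ℕ, 1 ≤ n → |r n| ≤ C * ((n : ℝ)⁻¹) ^ (p + 2)) :
    Tendsto
      (fun n : ℕ => |e n - e (n + 1)| / ((n : ℝ)⁻¹ - ((n : ℝ) + 1)⁻¹) ^ p)
      atTop (nhds 0) :=
  inverse_n_sequence_smooth_extension_general p hp C₁ C₂ C e r he hr
end
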